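/- For a limit ordinal λ < ε₀ and natural numbers x < y, one has λ_x ⊏_y λ_y, where ⊏_y is the pointwise-at-y ordering. Consequently, ⊏_x ⊆ ⊏_y whenever x ≤ y. -/

import Mathlib

/-- Ordinal terms below ε₀: a term is a list of exponents,
`cons β γ` denoting ω^β + γ. -/
inductive OT : Type
  | nil : OT
  | cons : OT → OT → OT
deriving DecidableEq

namespace OT

/-- The term 1 = ω^0. -/
def one : OT := cons nil nil

/-- Syntactic concatenation (direct sum) of ordinal terms. -/
def add : OT → OT → OT
  | nil, b => b
  | cons e r, b => cons e (add r b)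

/-- A term ω^{β₁}+...+ω^{β_m} is a successor iff m > 0 and β_m = 0. -/
def isSucc : OT → Bool
  | nil => false
  | cons e nil => e == nil
  | cons _ (cons e r) => isSucc (cons e r)

/-- Remove the last summand ω^0 of a successor term. -/
def pred : OT → OT
  | nil => nil
  | cons _ nil => nil
  | cons e (cons e' r) => cons e (pred (cons e' r))

/-- Limit terms. -/
def isLim (a : OT) : Prop := a ≠ nil ∧ isSucc a = false

/-- ω^β · n as an ordinal term. -/
def rep : ℕ → OT → OT
  | 0, _ => nil
  | n + 1, β => cons β (rep n β)

/-- The standard assignment of fundamental sequences (with ω_x = x+1):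
(γ+ω^{β+1})_x = γ+ω^β·(x+1) and (γ+ω^λ)_x = γ+ω^{λ_x}. -/
def fseq : OT → ℕ → OT
  | nil, _ => nil
  | cons β nil, x =>
      if β = nil then nil
      else if isSucc β then rep (x + 1) (pred β)
      else cons (fseq β x) nil
  | cons β (cons e r), x => cons β (fseq (cons e r) x)

/-- Syntactic ordering of terms (on CNF terms this is the ordinal ordering). -/
def lt : OT → OT → Prop
  | _, nil => False
  | nil, cons _ _ => True
  | cons a r, cons b s => lt a b ∨ (a = b ∧ lt r s)

def le (a b : OT) : Prop := lt a b ∨ a = b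

/-- Cantor normal form: exponents weakly decreasing, all in CNF. -/
def isCNF : OT → Prop
  | nil => True
  | cons b nil => isCNF b
  | cons b (cons e r) => isCNF b ∧ le e b ∧ isCNF (cons e r)

/-- Number of occurrences of the exponent β in a term. -/
def count (β : OT) : OT → ℕ
  | nil => 0
  | cons b r => (if b = β then 1 else 0) + count β r

/-- k-lean: every coefficient (at every level) is ≤ k. -/
def leanOrd (k : ℕ) : OT → Prop
  | nil => True
  | cons b r => count b (cons b r) ≤ k ∧ leanOrd k b ∧ leanOrd k r

end OT

/-- Pointwise-at-x ordering: smallest transitive relation with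
α ⊏_x α+1 and λ_x ⊏_x λ. -/
inductive Ptw (x : ℕ) : OT → OT → Prop
  | succ (a : OT) : Ptw x a (OT.add a OT.one)
  | lim (l : OT) : OT.isLim l → Ptw x (OT.fseq l x) l
  | trans {a b c : OT} : Ptw x a b → Ptw x b c → Ptw x a c

/-!
Prefixing a common head ω^β commutes with both the fundamental sequences and `⊏_y`, so the
first claim reduces to a single summand ω^β. For successor β the two terms are ω^{β-1}·(x+1)
and ω^{β-1}·(y+1), and ω^{β-1}·n ⊏_y ω^{β-1}·(n+1) because 0 ⊏_y α for every α > 0: descending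
from α through predecessors and y-th fundamental sequence terms reaches 0, since the value of a
term at ω := y+2 strictly decreases along the way. For limit β one inducts on β, using that
α ↦ ω^α is `⊏_y`-monotone. The second claim follows by induction on `⊏_x`, replacing each step
λ_x ⊏_x λ by λ_x ⊏_y λ_y ⊏_y λ.
-/

namespace OT

lemma add_one_ne_nil (a : OT) : add a one ≠ nil := by
  cases a <;> simp [add, one]

lemma isSucc_add_one (a : OT) : isSucc (add a one) = true := by
  induction a with
  | nil => rfl
  | cons e r _ ihr =>
    cases r with
    | nil => rfl
    | cons e' s => simpa [add, isSucc] using ihr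

lemma pred_add_one (a : OT) : pred (add a one) = a := by
  induction a with
  | nil => rfl
  | cons e r _ ihr =>
    cases r with
    | nil => rfl
    | cons e' s => exact congrArg (cons e) ihr

lemma add_pred_one {a : OT} (h : isSucc a = true) : add (pred a) one = a := by
  induction a with
  | nil => simp [isSucc] at h
  | cons e r _ ihr =>
    cases r with
    | nil =>
      obtain rfl : e = nil := by simpa [isSucc] using h
      rfl
    | cons e' s => exact congrArg (cons e) (ihr h)

def eval (n : ℕ) : OT → ℕ
  | nil => 0
  | cons b r => n ^ eval n b + eval n r

lemma eval_rep (n k : ℕ) (p : OT) : eval n (rep k p) = k * n ^ eval n p := by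
  induction k with
  | zero => simp [rep, eval]
  | succ k ih => simp only [rep, eval, ih]; ring

lemma eval_pred_lt (n : ℕ) {a : OT} (h : isSucc a = true) : eval n (pred a) < eval n a := by
  induction a with
  | nil => simp [isSucc] at h
  | cons e r _ ihr =>
    cases r with
    | nil =>
      obtain rfl : e = nil := by simpa [isSucc] using h
      simp [pred, eval]
    | cons e' s =>
      have := ihr h
      simp only [pred, eval] at this ⊢
      omega

lemma eval_fseq_lt {n x : ℕ} (hx : x + 1 < n) {l : OT} (hl : l ≠ nil) :
    eval n (fseq l x) < eval n l := by
  induction l with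
  | nil => exact absurd rfl hl
  | cons β r ihβ ihr =>
    cases r with
    | cons e s =>
      have := ihr (by simp)
      simp only [fseq, eval] at this ⊢
      omega
    | nil =>
      by_cases hβ : β = nil
      · subst hβ
        simp [fseq, eval]
      cases hs : isSucc β with
      | true =>
        have hpred := eval_pred_lt n hs
        calc eval n (fseq (cons β nil) x)
            = (x + 1) * n ^ eval n (pred β) := by simp [fseq, hβ, hs, eval_rep]
          _ < n * n ^ eval n (pred β) := by gcongr; exact Nat.pow_pos (by omega)
          _ = n ^ (eval n (pred β) + 1) := by ring
          _ ≤ n ^ eval n β := Nat.pow_le_pow_right (by omega) hpred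
          _ ≤ eval n (cons β nil) := by simp [eval]
      | false =>
        have := Nat.pow_lt_pow_right (a := n) (by omega) (ihβ hβ)
        simpa [fseq, hβ, hs, eval] using this

end OT

open OT

namespace Ptw

variable {y : ℕ}

lemma prepend {a b : OT} (p : OT) (h : Ptw y a b) : Ptw y (cons p a) (cons p b) := by
  induction h with
  | succ a => exact succ (cons p a)
  | lim l hl =>
    cases l with
    | nil => exact absurd rfl hl.1
    | cons e r => exact lim (cons p (cons e r)) ⟨by simp, hl.2⟩
  | trans _ _ ih₁ ih₂ => exact ih₁.trans ih₂

lemma nil_of_ne_nil {a : OT} (ha : a ≠ nil) : Ptw y nil a := by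
  induction hn : eval (y + 2) a using Nat.strong_induction_on generalizing a with
  | _ n ih =>
    subst hn
    cases hs : isSucc a with
    | true =>
      have hstep : Ptw y (pred a) a := by
        simpa only [add_pred_one hs] using succ (x := y) (pred a)
      by_cases hp : pred a = nil
      · rwa [hp] at hstep
      · exact (ih _ (eval_pred_lt _ hs) hp rfl).trans hstep
    | false =>
      have hstep : Ptw y (fseq a y) a := lim a ⟨ha, hs⟩
      by_cases hf : fseq a y = nil
      · rwa [hf] at hstep
      · exact (ih _ (eval_fseq_lt (by omega) ha) hf rfl).trans hstep

lemma rep_succ (n : ℕ) (p : OT) : Ptw y (rep n p) (rep (n + 1) p) := by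
  induction n with
  | zero => exact nil_of_ne_nil (by simp [rep])
  | succ n ih => exact ih.prepend p

lemma rep_of_lt {n m : ℕ} (h : n < m) (p : OT) : Ptw y (rep n p) (rep m p) := by
  induction m, h using Nat.le_induction with
  | base => exact rep_succ n p
  | succ m _ ih => exact ih.trans (rep_succ m p)

lemma omega_opow {a b : OT} (h : Ptw y a b) : Ptw y (cons a nil) (cons b nil) := by
  induction h with
  | succ a =>
    have hl : Ptw y (rep (y + 1) a) (cons (add a one) nil) := by
      simpa [fseq, add_one_ne_nil, isSucc_add_one, pred_add_one] using
        lim (x := y) (cons (add a one) nil) ⟨by simp, by simpa [isSucc] using add_one_ne_nil a⟩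
    rcases Nat.eq_zero_or_pos y with rfl | hy
    · exact hl
    · exact (rep_of_lt (Nat.succ_lt_succ hy) a).trans hl
  | lim l hl =>
    simpa [fseq, hl.1, hl.2] using
      lim (x := y) (cons l nil) ⟨by simp, by simpa [isSucc] using hl.1⟩
  | trans _ _ ih₁ ih₂ => exact ih₁.trans ih₂

lemma fseq_of_lt {l : OT} (hl : isLim l) {x : ℕ} (hxy : x < y) :
    Ptw y (fseq l x) (fseq l y) := by
  induction l with
  | nil => exact absurd rfl hl.1
  | cons β r ihβ ihr =>
    cases r with
    | cons e s => simpa [fseq] using (ihr ⟨by simp, hl.2⟩).prepend β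
    | nil =>
      have hβ : β ≠ nil := by
        rintro rfl
        simp [isLim, isSucc] at hl
      cases hs : isSucc β with
      | true =>
        simpa [fseq, hβ, hs] using rep_of_lt (y := y) (Nat.succ_lt_succ hxy) (pred β)
      | false =>
        simpa [fseq, hβ, hs] using omega_opow (ihβ ⟨hβ, hs⟩)

lemma mono {x : ℕ} (hxy : x ≤ y) {a b : OT} (h : Ptw x a b) : Ptw y a b := by
  induction h with
  | succ a => exact succ a
  | lim l hl =>
    rcases hxy.lt_or_eq with hlt | rfl
    · exact (fseq_of_lt hl hlt).trans (lim l hl)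
    · exact lim l hl
  | trans _ _ ih₁ ih₂ => exact ih₁.trans ih₂

end Ptw

/-- For a limit λ and x < y, λ_x ⊏_y λ_y; consequently ⊏_x ⊆ ⊏_y for x ≤ y. -/
theorem stmt16 :
    (∀ (l : OT) (x y : ℕ), OT.isLim l → x < y →
      Ptw y (OT.fseq l x) (OT.fseq l y)) ∧
    (∀ x y : ℕ, x ≤ y → ∀ a b : OT, Ptw x a b → Ptw y a b) :=
  ⟨fun _ _ _ hl hxy => Ptw.fseq_of_lt hl hxy, fun _ _ hxy _ _ => Ptw.mono hxy⟩
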